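/- arXiv:1104.4792 — 5 statements merged into one kernel-verified Lean document; each statement's English description precedes it below -/
import Mathlib

section
/- For every natural number q ≥ 1 and every ordered partition J of Fin q into s nonempty blocks, the map Φ sending a strictly increasing tuple t : Fin s → ℝ with −1 < t 0 and t (s−1) < 1 to the function c : Fin q → ℝ with c i = t k for every i ∈ J k is a homeomorphism from {t : Fin s → ℝ | StrictMono t ∧ −1 < t 0 ∧ t (s−1) < 1} onto the stratum S_J (both with subspace topologies). In particular S_J is a nonempty convex subset of Fin q → ℝ. -/
/-- An ordered partition of `Fin q` into `s` nonempty blocks: a map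
`blocks : Fin s → Finset (Fin q)` with nonempty, pairwise disjoint blocks
whose union is all of `Fin q`. -/
structure OrderedPartition (q s : ℕ) where
  blocks : Fin s → Finset (Fin q)
  nonempty : ∀ k, (blocks k).Nonempty
  disjoint : ∀ k l, k ≠ l → Disjoint (blocks k) (blocks l)
  cover : ∀ i, ∃ k, i ∈ blocks k

/-- The star-shaped region `S_{⪯J}` in the open cube `(-1;1)^q`. -/
def SleJ {q s : ℕ} (J : OrderedPartition q s) : Set (Fin q → ℝ) :=
  {c | (∀ i, -1 < c i ∧ c i < 1) ∧
       ∀ k l : Fin s, k < l → ∀ i ∈ J.blocks k, ∀ j ∈ J.blocks l, c i < c j}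

/-- The stratum `S_J` in the open cube `(-1;1)^q`. -/
def SJ {q s : ℕ} (J : OrderedPartition q s) : Set (Fin q → ℝ) :=
  {c | c ∈ SleJ J ∧ ∀ k : Fin s, ∀ i ∈ J.blocks k, ∀ j ∈ J.blocks k, c i = c j}

/-- `J'` refines `J` (written `J' ⪯ J`): there is a monotone surjection
`φ : Fin s' → Fin s` with `J' k ⊆ J (φ k)` for every `k`. -/
def Refines {q s' s : ℕ} (J' : OrderedPartition q s') (J : OrderedPartition q s) : Prop :=
  ∃ φ : Fin s' → Fin s, Monotone φ ∧ Function.Surjective φ ∧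
    ∀ k : Fin s', J'.blocks k ⊆ J.blocks (φ k)

/-- `J` is the value-partition of `c`: `c` is constant on each block and takes
strictly increasing values on successive blocks. -/
def IsValuePartition {q s : ℕ} (c : Fin q → ℝ) (J : OrderedPartition q s) : Prop :=
  (∀ k : Fin s, ∀ i ∈ J.blocks k, ∀ j ∈ J.blocks k, c i = c j) ∧
  ∀ k l : Fin s, k < l → ∀ i ∈ J.blocks k, ∀ j ∈ J.blocks l, c i < c j

namespace OPAux

variable {q s : ℕ}

noncomputable def idx (J : OrderedPartition q s) (i : Fin q) : Fin s :=
  (J.cover i).choose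

lemma mem_idx (J : OrderedPartition q s) (i : Fin q) : i ∈ J.blocks (idx J i) :=
  (J.cover i).choose_spec

lemma idx_eq (J : OrderedPartition q s) {i : Fin q} {k : Fin s} (h : i ∈ J.blocks k) :
    idx J i = k := by
  by_contra hne
  exact Finset.disjoint_left.mp (J.disjoint _ _ hne) (mem_idx J i) h

noncomputable def rep (J : OrderedPartition q s) (k : Fin s) : Fin q :=
  (J.nonempty k).choose

lemma mem_rep (J : OrderedPartition q s) (k : Fin s) : rep J k ∈ J.blocks k :=
  (J.nonempty k).choose_spec

lemma combo_lt {a b x y x' y' : ℝ} (ha : 0 ≤ a) (hb : 0 ≤ b) (hab : a + b = 1)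
    (hx : x < x') (hy : y < y') : a*x + b*y < a*x' + b*y' := by
  rcases eq_or_lt_of_le ha with h | h
  · have hb1 : b = 1 := by linarith
    rw [← h, hb1]; simpa using hy
  · have h1 : a*x < a*x' := mul_lt_mul_of_pos_left hx h
    have h2 : b*y ≤ b*y' := mul_le_mul_of_nonneg_left hy.le hb
    linarith

lemma forward_mem (J : OrderedPartition q s) (hs : 0 < s) {t : Fin s → ℝ}
    (hmono : StrictMono t) (h0 : -1 < t ⟨0, hs⟩)
    (h1 : t ⟨s - 1, Nat.sub_lt hs Nat.one_pos⟩ < 1) :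
    (fun i => t (idx J i)) ∈ SJ J := by
  refine ⟨⟨fun i => ⟨?_, ?_⟩, ?_⟩, ?_⟩
  · exact lt_of_lt_of_le h0 (hmono.monotone (by simp [Fin.le_def]))
  · refine lt_of_le_of_lt (hmono.monotone ?_) h1
    have := (idx J i).isLt
    simp only [Fin.le_def]; omega
  · intro k l hkl i hi j hj
    simpa [idx_eq J hi, idx_eq J hj] using hmono hkl
  · intro k i hi j hj
    simp [idx_eq J hi, idx_eq J hj]

end OPAux

open OPAux

/-- the map sending a strictly increasing tuple `t : Fin s → ℝ`
with `-1 < t 0` and `t (s-1) < 1` to the function `c : Fin q → ℝ` with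
`c i = t k` for `i ∈ J k` is a homeomorphism onto the stratum `S_J`
(subspace topologies). In particular `S_J` is nonempty and convex. -/
theorem stratum_homeomorph_strictMono_tuples {q s : ℕ} (hq : 1 ≤ q) (hs : 0 < s)
    (J : OrderedPartition q s) :
    (∃ Φ : {t : Fin s → ℝ // StrictMono t ∧ -1 < t ⟨0, hs⟩ ∧
        t ⟨s - 1, Nat.sub_lt hs Nat.one_pos⟩ < 1} ≃ₜ ↥(SJ J),
      ∀ t (k : Fin s), ∀ i ∈ J.blocks k, (Φ t).1 i = t.1 k) ∧
    (SJ J).Nonempty ∧ Convex ℝ (SJ J) := by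
  classical
  -- inverse membership
  have inv_mem : ∀ c ∈ SJ J, StrictMono (fun k => c (rep J k)) ∧
      -1 < c (rep J ⟨0, hs⟩) ∧ c (rep J ⟨s - 1, Nat.sub_lt hs Nat.one_pos⟩) < 1 := by
    intro c hc
    refine ⟨fun k l hkl => hc.1.2 k l hkl _ (mem_rep J k) _ (mem_rep J l),
      (hc.1.1 _).1, (hc.1.1 _).2⟩
  -- the equivalence
  let e : {t : Fin s → ℝ // StrictMono t ∧ -1 < t ⟨0, hs⟩ ∧
      t ⟨s - 1, Nat.sub_lt hs Nat.one_pos⟩ < 1} ≃ ↥(SJ J) :=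
    { toFun := fun t => ⟨fun i => t.1 (idx J i), forward_mem J hs t.2.1 t.2.2.1 t.2.2.2⟩
      invFun := fun c => ⟨fun k => c.1 (rep J k), inv_mem c.1 c.2⟩
      left_inv := by
        intro t
        ext k
        show t.1 (idx J (rep J k)) = t.1 k
        rw [idx_eq J (mem_rep J k)]
      right_inv := by
        intro c
        ext i
        simp only
        exact c.2.2 (idx J i) _ (mem_rep J _) i (mem_idx J i) }
  have hcont1 : Continuous e := by
    apply Continuous.subtype_mk
    exact continuous_pi fun i => (continuous_apply (idx J i)).comp continuous_subtype_val
  have hcont2 : Continuous e.symm := by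
    apply Continuous.subtype_mk
    exact continuous_pi fun k => (continuous_apply (rep J k)).comp continuous_subtype_val
  refine ⟨⟨⟨e, hcont1, hcont2⟩, ?_⟩, ?_, ?_⟩
  · intro t k i hi
    show t.1 (idx J i) = t.1 k
    rw [idx_eq J hi]
  · -- nonempty
    have hs' : (0:ℝ) < s := by exact_mod_cast hs
    have hmono : StrictMono (fun k : Fin s => (k : ℝ) * (s : ℝ)⁻¹) := by
      intro k l hkl
      have : (k : ℝ) < l := by exact_mod_cast hkl
      exact mul_lt_mul_of_pos_right this (inv_pos.mpr hs')
    have h0 : -1 < ((⟨0, hs⟩ : Fin s) : ℝ) * (s : ℝ)⁻¹ := by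
      simp
    have h1 : ((⟨s - 1, Nat.sub_lt hs Nat.one_pos⟩ : Fin s) : ℝ) * (s : ℝ)⁻¹ < 1 := by
      have hlt : ((s - 1 : ℕ) : ℝ) < s := by exact_mod_cast Nat.sub_lt hs Nat.one_pos
      calc ((s - 1 : ℕ) : ℝ) * (s : ℝ)⁻¹ < (s : ℝ) * (s : ℝ)⁻¹ :=
            mul_lt_mul_of_pos_right hlt (inv_pos.mpr hs')
        _ = 1 := mul_inv_cancel₀ hs'.ne'
    exact ⟨_, forward_mem J hs hmono h0 h1⟩
  · -- convex
    intro c hc d hd a b ha hb hab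
    refine ⟨⟨fun i => ⟨?_, ?_⟩, ?_⟩, ?_⟩
    · have := combo_lt ha hb hab (hc.1.1 i).1 (hd.1.1 i).1
      simp only [Pi.add_apply, Pi.smul_apply, smul_eq_mul]
      nlinarith
    · have := combo_lt ha hb hab (hc.1.1 i).2 (hd.1.1 i).2
      simp only [Pi.add_apply, Pi.smul_apply, smul_eq_mul]
      nlinarith
    · intro k l hkl i hi j hj
      have := combo_lt ha hb hab (hc.1.2 k l hkl i hi j hj) (hd.1.2 k l hkl i hi j hj)
      simpa using this
    · intro k i hi j hj
      simp only [Pi.add_apply, Pi.smul_apply, smul_eq_mul]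
      rw [hc.2 k i hi j hj, hd.2 k i hi j hj]
end

section
/- For all ordered partitions J and J' of Fin q into nonempty blocks: if J' refines J (J' ⪯ J), then the stratum S_J is contained in the topological closure of the stratum S_{J'} in the space Fin q → ℝ. -/
/-- if `J'` refines `J`, then the stratum `S_J` is contained in
the topological closure of the stratum `S_{J'}` in `Fin q → ℝ`. -/
theorem SJ_subset_closure_of_refines {q s s' : ℕ}
    (J : OrderedPartition q s) (J' : OrderedPartition q s')
    (h : Refines J' J) : SJ J ⊆ closure (SJ J') := by

  classical
  intro c hc
  obtain ⟨φ, hmono, hsurj, hsub⟩ := h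
  choose blk hblk using J'.cover
  have huniq : ∀ i k, i ∈ J'.blocks k → blk i = k := by
    intro i k hik
    by_contra hne
    exact Finset.disjoint_left.mp (J'.disjoint _ _ hne) (hblk i) hik
  set u : ℕ → Fin q → ℝ := fun n i => c i + (1 / (n + 1)) * ((blk i : ℕ) : ℝ) with hu
  have hcoord : ∀ i, Filter.Tendsto (fun n => u n i) Filter.atTop (nhds (c i)) := by
    intro i
    have h0 : Filter.Tendsto (fun n : ℕ => (1 : ℝ) / (n + 1)) Filter.atTop (nhds 0) :=
      tendsto_one_div_add_atTop_nhds_zero_nat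
    have := Filter.Tendsto.add (tendsto_const_nhds (x := c i) (f := Filter.atTop))
      (h0.mul_const ((blk i : ℕ) : ℝ))
    simpa [hu, one_div] using this
  have htend : Filter.Tendsto u Filter.atTop (nhds c) := by
    rw [tendsto_pi_nhds]; exact hcoord
  apply mem_closure_of_tendsto htend
  have hub : ∀ i : Fin q, ∀ᶠ n : ℕ in Filter.atTop, u n i < 1 :=
    fun i => (hcoord i).eventually (gt_mem_nhds (hc.1.1 i).2)
  have hall : ∀ᶠ n in Filter.atTop, ∀ i, u n i < 1 := Filter.eventually_all.mpr hub
  filter_upwards [hall] with n hn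
  have hεpos : (0 : ℝ) < 1 / (n + 1) := by positivity
  refine ⟨⟨fun i => ⟨?_, hn i⟩, ?_⟩, ?_⟩
  · have h1 : (0:ℝ) ≤ (1 / (n + 1)) * ((blk i : ℕ) : ℝ) := by positivity
    have := (hc.1.1 i).1
    simp only [hu]
    linarith
  · intro k l hkl i hi j hj
    have hbi : blk i = k := huniq i k hi
    have hbj : blk j = l := huniq j l hj
    have hcast : ((k : ℕ) : ℝ) < ((l : ℕ) : ℝ) := by exact_mod_cast hkl
    have hε : (1 / (n + 1) : ℝ) * ((k : ℕ) : ℝ) < (1 / (n + 1)) * ((l : ℕ) : ℝ) :=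
      mul_lt_mul_of_pos_left hcast hεpos
    rcases eq_or_lt_of_le (hmono hkl.le) with heq | hlt
    · have hcc : c i = c j := hc.2 (φ k) i (hsub k hi) j (heq ▸ hsub l hj)
      simp only [hu, hbi, hbj]
      linarith
    · have hcc : c i < c j := hc.1.2 (φ k) (φ l) hlt i (hsub k hi) j (hsub l hj)
      simp only [hu, hbi, hbj]
      linarith
  · intro k i hi j hj
    have hbi : blk i = k := huniq i k hi
    have hbj : blk j = k := huniq j k hj
    have hcc : c i = c j := hc.2 (φ k) i (hsub k hi) j (hsub k hj)
    simp only [hu, hbi, hbj, hcc]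
end

section
/- For every natural number q ≥ 1 and every ordered partition J of Fin q into s nonempty blocks, the closure of the stratum S_J relative to the open cube C := {c : Fin q → ℝ | ∀ i, −1 < c i ∧ c i < 1} equals the set of all c ∈ C such that c is constant on each block J k and, whenever k ≤ l, the value of c on J k is less than or equal to the value of c on J l. -/
/-- the closure of the stratum `S_J` relative to the open cube
`C = (-1;1)^q` equals the set of `c ∈ C` that are constant on each block of
`J` and take non-decreasing values on the successive blocks. -/
theorem closure_SJ_inter_cube {q s : ℕ} (hq : 1 ≤ q) (J : OrderedPartition q s) :
    closure (SJ J) ∩ {c : Fin q → ℝ | ∀ i, -1 < c i ∧ c i < 1} =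
      {c : Fin q → ℝ | (∀ i, -1 < c i ∧ c i < 1) ∧
        (∀ k : Fin s, ∀ i ∈ J.blocks k, ∀ j ∈ J.blocks k, c i = c j) ∧
        (∀ k l : Fin s, k ≤ l → ∀ i ∈ J.blocks k, ∀ j ∈ J.blocks l, c i ≤ c j)} := by

  ext c
  simp only [Set.mem_inter_iff, Set.mem_setOf_eq]
  constructor
  · rintro ⟨hc, hcube⟩
    refine ⟨hcube, ?_, ?_⟩
    · intro k i hi j hj
      have hsub : SJ J ⊆ {x : Fin q → ℝ | x i = x j} := by
        intro x hx; exact hx.2 k i hi j hj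
      have hcl : IsClosed {x : Fin q → ℝ | x i = x j} :=
        isClosed_eq (continuous_apply i) (continuous_apply j)
      exact hcl.closure_subset_iff.2 hsub hc
    · intro k l hkl i hi j hj
      rcases lt_or_eq_of_le hkl with h | h
      · have hsub : SJ J ⊆ {x : Fin q → ℝ | x i ≤ x j} := by
          intro x hx; exact (hx.1.2 k l h i hi j hj).le
        have hcl : IsClosed {x : Fin q → ℝ | x i ≤ x j} :=
          isClosed_le (continuous_apply i) (continuous_apply j)
        exact hcl.closure_subset_iff.2 hsub hc
      · subst h
        have hsub : SJ J ⊆ {x : Fin q → ℝ | x i = x j} := by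
          intro x hx; exact hx.2 k i hi j hj
        have hcl : IsClosed {x : Fin q → ℝ | x i = x j} :=
          isClosed_eq (continuous_apply i) (continuous_apply j)
        exact le_of_eq (hcl.closure_subset_iff.2 hsub hc)
  · rintro ⟨hcube, hconst, hmono⟩
    refine ⟨?_, hcube⟩
    -- block index function
    have hbu : ∀ i : Fin q, ∀ k, i ∈ J.blocks k → (J.cover i).choose = k := by
      intro i k hk
      by_contra hne
      have := (J.disjoint _ k hne).le_bot
        (Finset.mem_inter.2 ⟨(J.cover i).choose_spec, hk⟩)
      simpa using this
    set b : Fin q → Fin s := fun i => (J.cover i).choose with hb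
    set d : Fin q → ℝ := fun i => ((b i : ℝ) + 1) / ((s : ℝ) + 1) with hd
    have hspos : (0:ℝ) < (s:ℝ) + 1 := by positivity
    have hd01 : ∀ i, 0 < d i ∧ d i < 1 := by
      intro i
      constructor
      · apply div_pos (by positivity) hspos
      · rw [div_lt_one hspos]
        have : (b i : ℝ) < s := by exact_mod_cast (b i).isLt
        linarith
    have hdlt : ∀ k l : Fin s, k < l → ∀ i ∈ J.blocks k, ∀ j ∈ J.blocks l, d i < d j := by
      intro k l hkl i hi j hj
      have hbi : b i = k := hbu i k hi
      have hbj : b j = l := hbu j l hj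
      simp only [hd, hbi, hbj]
      gcongr
      exact_mod_cast hkl
    have hdeq : ∀ k : Fin s, ∀ i ∈ J.blocks k, ∀ j ∈ J.blocks k, d i = d j := by
      intro k i hi j hj
      simp only [hd]
      rw [show b i = k from hbu i k hi, show b j = k from hbu j k hj]
    -- the path
    set f : ℝ → (Fin q → ℝ) := fun t i => (1 - t) * c i + t * d i with hf
    have htend : Filter.Tendsto f (nhdsWithin 0 (Set.Ioi 0)) (nhds c) := by
      have : Filter.Tendsto f (nhds 0) (nhds (f 0)) := by
        apply Continuous.tendsto
        apply continuous_pi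
        intro i
        fun_prop
      have hf0 : f 0 = c := by
        funext i; simp [hf]
      rw [hf0] at this
      exact this.mono_left nhdsWithin_le_nhds
    apply mem_closure_of_tendsto htend
    have hIoo : Set.Ioo (0:ℝ) 1 ∈ nhdsWithin 0 (Set.Ioi 0) :=
      Ioo_mem_nhdsGT_of_mem ⟨le_refl 0, one_pos⟩
    filter_upwards [hIoo] with t ht
    obtain ⟨ht0, ht1⟩ := ht
    refine ⟨⟨?_, ?_⟩, ?_⟩
    · intro i
      have h1 := (hcube i).1
      have h2 := (hcube i).2
      have h3 := (hd01 i).1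
      have h4 := (hd01 i).2
      constructor
      · simp only [hf]; nlinarith
      · simp only [hf]; nlinarith
    · intro k l hkl i hi j hj
      have h1 := hmono k l hkl.le i hi j hj
      have h2 := hdlt k l hkl i hi j hj
      simp only [hf]; nlinarith
    · intro k i hi j hj
      simp only [hf, hconst k i hi j hj, hdeq k i hi j hj]
end

section
/- For all ordered partitions J and J' of Fin q into nonempty blocks: S_{⪯J'} ⊆ S_{⪯J} if and only if J' refines J (J' ⪯ J). -/
/-- `S_{⪯J'} ⊆ S_{⪯J}` if and only if `J'` refines `J`. -/
theorem SleJ_subset_iff_refines {q s s' : ℕ}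
    (J : OrderedPartition q s) (J' : OrderedPartition q s') :
    SleJ J' ⊆ SleJ J ↔ Refines J' J := by
  classical
  constructor
  · intro hsub
    -- build a witness point c
    have hs1 : (0:ℝ) < (s':ℝ)+1 := by positivity
    set t : Fin s' → ℝ := fun k => -1 + 2*((k:ℝ)+1)/((s':ℝ)+1) with ht
    have ht_mem : ∀ k, -1 < t k ∧ t k < 1 := by
      intro k
      have hk : ((k:ℕ):ℝ) + 1 ≤ (s':ℝ) := by
        have := k.isLt
        exact_mod_cast Nat.succ_le_of_lt this
      constructor
      · have : 0 < 2*((k:ℝ)+1)/((s':ℝ)+1) := by positivity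
        simp only [ht]; linarith
      · have h2 : 2*((k:ℝ)+1)/((s':ℝ)+1) < 2 := by
          rw [div_lt_iff₀ hs1]; nlinarith
        simp only [ht]; linarith
    have ht_mono : ∀ k l : Fin s', k < l → t k < t l := by
      intro k l hkl
      have : ((k:ℕ):ℝ) < ((l:ℕ):ℝ) := by exact_mod_cast hkl
      simp only [ht]
      gcongr
    set idx : Fin q → Fin s' := fun i => (J'.cover i).choose with hidxdef
    have hidx : ∀ i, i ∈ J'.blocks (idx i) := fun i => (J'.cover i).choose_spec
    have hidx_eq : ∀ i k, i ∈ J'.blocks k → idx i = k := by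
      intro i k hik
      by_contra h
      exact Finset.disjoint_left.1 (J'.disjoint _ _ h) (hidx i) hik
    set c : Fin q → ℝ := fun i => t (idx i) with hcdef
    have hc' : c ∈ SleJ J' := by
      refine ⟨fun i => ht_mem _, ?_⟩
      intro k l hkl i hi j hj
      have hik := hidx_eq i k hi
      have hjl := hidx_eq j l hj
      simp only [hcdef, hik, hjl]
      exact ht_mono k l hkl
    have hc : c ∈ SleJ J := hsub hc'
    -- each J' block sits inside a single J block
    have hsub_block : ∀ k : Fin s', ∃ m, J'.blocks k ⊆ J.blocks m := by
      intro k
      obtain ⟨i, hi⟩ := J'.nonempty k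
      obtain ⟨m, hm⟩ := J.cover i
      refine ⟨m, fun j hj => ?_⟩
      obtain ⟨m', hm'⟩ := J.cover j
      have hcij : c i = c j := by
        simp only [hcdef, hidx_eq i k hi, hidx_eq j k hj]
      rcases lt_trichotomy m m' with h | h | h
      · exact absurd (hc.2 m m' h i hm j hm') (by rw [hcij]; exact lt_irrefl _)
      · subst h; exact hm'
      · exact absurd (hc.2 m' m h j hm' i hm) (by rw [hcij]; exact lt_irrefl _)
    choose φ hφ using hsub_block
    refine ⟨φ, ?_, ?_, hφ⟩
    · intro k l hkl
      rcases eq_or_lt_of_le hkl with rfl | hkl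
      · exact le_rfl
      obtain ⟨i, hi⟩ := J'.nonempty k
      obtain ⟨j, hj⟩ := J'.nonempty l
      by_contra h
      push_neg at h
      have h1 : c j < c i := hc.2 _ _ h j (hφ l hj) i (hφ k hi)
      have h2 : c i < c j := hc'.2 _ _ hkl i hi j hj
      linarith
    · intro m
      obtain ⟨i, hi⟩ := J.nonempty m
      obtain ⟨k, hk⟩ := J'.cover i
      refine ⟨k, ?_⟩
      by_contra h
      exact Finset.disjoint_left.1 (J.disjoint _ _ h) (hφ k hk) hi
  · rintro ⟨φ, hmono, hsurj, hφ⟩ c hc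
    refine ⟨hc.1, ?_⟩
    intro k l hkl i hi j hj
    obtain ⟨k', hk'⟩ := J'.cover i
    obtain ⟨l', hl'⟩ := J'.cover j
    have hφk : φ k' = k := by
      by_contra h
      exact Finset.disjoint_left.1 (J.disjoint _ _ h) (hφ k' hk') hi
    have hφl : φ l' = l := by
      by_contra h
      exact Finset.disjoint_left.1 (J.disjoint _ _ h) (hφ l' hl') hj
    have hkl' : k' < l' := by
      by_contra h
      push_neg at h
      have := hmono h
      rw [hφk, hφl] at this
      exact absurd hkl (not_lt.2 this)
    exact hc.2 k' l' hkl' i hk' j hl'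
end

section
/- For every natural number q ≥ 1 and every ordered partition J of Fin q into s nonempty blocks, the stratum S_J is an open subset of the space Fin q → ℝ if and only if s = q, i.e., if and only if every block of J is a singleton. -/
/-- the stratum `S_J` is open in `Fin q → ℝ` iff `s = q`, i.e.
iff every block of `J` is a singleton. -/
theorem isOpen_SJ_iff {q s : ℕ} (hq : 1 ≤ q) (J : OrderedPartition q s) :
    (IsOpen (SJ J) ↔ s = q) ∧ (s = q ↔ ∀ k : Fin s, (J.blocks k).card = 1) := by
  classical
  have hsum : ∑ k : Fin s, (J.blocks k).card = q := by
    have hunion : (Finset.univ : Finset (Fin s)).biUnion J.blocks = Finset.univ := by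
      ext i
      simp only [Finset.mem_biUnion, Finset.mem_univ, true_and, iff_true]
      exact J.cover i
    have h := Finset.card_biUnion
      (s := (Finset.univ : Finset (Fin s))) (t := J.blocks)
      (fun k _ l _ hkl => J.disjoint k l hkl)
    rw [hunion] at h
    simpa using h.symm
  have hone : ∀ k : Fin s, 1 ≤ (J.blocks k).card :=
    fun k => Finset.card_pos.mpr (J.nonempty k)
  have hiff2 : s = q ↔ ∀ k : Fin s, (J.blocks k).card = 1 := by
    constructor
    · intro h k
      have hsum' : ∑ k : Fin s, (1 : ℕ) = ∑ k : Fin s, (J.blocks k).card := by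
        rw [hsum, Finset.sum_const, Finset.card_univ, Fintype.card_fin, smul_eq_mul,
          mul_one, h]
      have := (Finset.sum_eq_sum_iff_of_le (fun k _ => hone k)).mp hsum' k
        (Finset.mem_univ k)
      omega
    · intro h
      rw [← hsum]
      simp [h]
  refine ⟨?_, hiff2⟩
  constructor
  · intro hopen
    by_contra hne
    have hsle : s ≤ q := by
      calc s = ∑ _k : Fin s, 1 := by simp
        _ ≤ ∑ k : Fin s, (J.blocks k).card := Finset.sum_le_sum fun k _ => hone k
        _ = q := hsum
    obtain ⟨k0, hk0⟩ : ∃ k : Fin s, 1 < (J.blocks k).card := by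
      by_contra hall
      push_neg at hall
      have : q ≤ s := by
        calc q = ∑ k : Fin s, (J.blocks k).card := hsum.symm
          _ ≤ ∑ _k : Fin s, 1 := Finset.sum_le_sum fun k _ => hall k
          _ = s := by simp
      omega
    obtain ⟨i, hi, j, hj, hij⟩ := Finset.one_lt_card.mp hk0
    set kf : Fin q → Fin s := fun i => (J.cover i).choose with hkfdef
    have hkmem : ∀ i, i ∈ J.blocks (kf i) := fun i => (J.cover i).choose_spec
    have hkeq : ∀ (i : Fin q) (k : Fin s), i ∈ J.blocks k → kf i = k := by
      intro i k hmem
      by_contra hne'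
      exact (Finset.disjoint_left.mp (J.disjoint _ _ hne') (hkmem i)) hmem
    set c : Fin q → ℝ := fun i => (((kf i : ℕ) : ℝ) + 1) / ((s : ℝ) + 1) with hcdef
    have hspos : (0:ℝ) < (s:ℝ) + 1 := by positivity
    have hclt : ∀ x : Fin q, 0 < c x ∧ c x < 1 := by
      intro x
      constructor
      · positivity
      · rw [hcdef, div_lt_one hspos]
        have := (kf x).isLt
        have : ((kf x : ℕ) : ℝ) < (s : ℝ) := by exact_mod_cast this
        linarith
    have hcmem : c ∈ SJ J := by
      refine ⟨⟨fun x => ⟨by linarith [(hclt x).1], (hclt x).2⟩, ?_⟩, ?_⟩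
      · intro k l hkl i' hi' j' hj'
        simp only [hcdef]
        rw [hkeq i' k hi', hkeq j' l hj']
        gcongr
        exact_mod_cast hkl
      · intro k i' hi' j' hj'
        simp only [hcdef]
        rw [hkeq i' k hi', hkeq j' k hj']
    rw [Metric.isOpen_iff] at hopen
    obtain ⟨ε, hε, hball⟩ := hopen c hcmem
    set c' : Fin q → ℝ := Function.update c j (c j + ε/2) with hc'def
    have hc'ball : c' ∈ Metric.ball c ε := by
      rw [Metric.mem_ball, dist_pi_lt_iff hε]
      intro x
      by_cases hx : x = j
      · subst hx
        have h1 : c' x = c x + ε/2 := Function.update_self _ _ _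
        rw [Real.dist_eq, h1]
        rw [show c x + ε/2 - c x = ε/2 by ring, abs_of_pos (by linarith)]
        linarith
      · rw [hc'def, Function.update_of_ne hx]
        simpa using hε
    have heq : c' i = c' j := (hball hc'ball).2 k0 i hi j hj
    have hci : c' i = c i := Function.update_of_ne hij _ _
    have hcj : c' j = c j + ε/2 := Function.update_self _ _ _
    have hcij : c i = c j := hcmem.2 k0 i hi j hj
    rw [hci, hcj, hcij] at heq
    linarith
  · intro hsq
    have hsing := hiff2.mp hsq
    have hSJ : SJ J = SleJ J := by
      ext c
      simp only [SJ, Set.mem_setOf_eq, and_iff_left_iff_imp]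
      intro _ k i hi j hj
      obtain ⟨a, ha⟩ := Finset.card_eq_one.mp (hsing k)
      rw [ha, Finset.mem_singleton] at hi hj
      rw [hi, hj]
    rw [hSJ]
    have hrw : SleJ J = (⋂ i, ({c : Fin q → ℝ | -1 < c i} ∩ {c | c i < 1})) ∩
        ⋂ k, ⋂ l, ⋂ (_ : k < l), ⋂ i, ⋂ (_ : i ∈ J.blocks k), ⋂ j,
          ⋂ (_ : j ∈ J.blocks l), {c : Fin q → ℝ | c i < c j} := by
      ext c
      simp only [SleJ, Set.mem_setOf_eq, Set.mem_inter_iff, Set.mem_iInter]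
    rw [hrw]
    apply IsOpen.inter
    · exact isOpen_iInter_of_finite fun i =>
        (isOpen_lt continuous_const (continuous_apply i)).inter
          (isOpen_lt (continuous_apply i) continuous_const)
    · exact isOpen_iInter_of_finite fun k => isOpen_iInter_of_finite fun l =>
        isOpen_iInter_of_finite fun _ => isOpen_iInter_of_finite fun i =>
        isOpen_iInter_of_finite fun _ => isOpen_iInter_of_finite fun j =>
        isOpen_iInter_of_finite fun _ =>
          isOpen_lt (continuous_apply i) (continuous_apply j)
end
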